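/- Let G be a connected simple graph and I ⊆ V(G) a pre-cycle core of G. Then for any y, z ∈ I, every non-backtracking walk in G between y and z has all of its vertices in I, i.e. is contained in the induced subgraph G|_I. -/

import Mathlib

/-! A non-backtracking walk between vertices of `I` can be cut at its interior visits to `I`, so
it suffices to treat a walk meeting `I` only at its ends. If it repeats a vertex, its shortest
closed subwalk is a cycle (being non-backtracking rules out length two), and that cycle has a
vertex other than the two ends, hence outside `I`. If it is a path, closing it up by a path
inside `G|_I` gives a cycle through its interior vertices. Either way a cycle leaves `I`; but
cutting along chords shows that every vertex of a cycle lies on a chordless one, which `I`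
contains. -/

namespace CoxPerp

/-! ### Graph-theoretic preliminaries -/

variable {V : Type*}

/-- The subgraph of `G` induced on `I` (padded with isolated vertices). -/
def Restrict (G : SimpleGraph V) (I : Set V) : SimpleGraph V where
  Adj u v := u ∈ I ∧ v ∈ I ∧ G.Adj u v
  symm := ⟨fun u v ⟨hu, hv, h⟩ => ⟨hv, hu, h.symm⟩⟩
  loopless := ⟨fun u ⟨_, _, h⟩ => G.loopless.irrefl u h⟩

/-- The induced subgraph `G|_I` is connected (in particular nonempty). -/
def ConnectedOn (G : SimpleGraph V) (I : Set V) : Prop :=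
  I.Nonempty ∧ ∀ u ∈ I, ∀ v ∈ I, (Restrict G I).Reachable u v

/-- `C` is the vertex set of a cycle of `G` in the sense of the paper: a closed path
`x_0, …, x_{n-1}, x_0` with no repeated vertices and no chords. -/
def IsInducedCycle (G : SimpleGraph V) (C : Set V) : Prop :=
  ∃ (n : ℕ) (f : ZMod n → V), 3 ≤ n ∧ Function.Injective f ∧ Set.range f = C ∧
    (∀ i, G.Adj (f i) (f (i + 1))) ∧
    ∀ i j, G.Adj (f i) (f j) → j = i + 1 ∨ i = j + 1

/-- `G` contains a cycle. -/
def HasCycle (G : SimpleGraph V) : Prop := ∃ C, IsInducedCycle G C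

/-- `G` contains no cycle. -/
def Acyclic (G : SimpleGraph V) : Prop := ¬HasCycle G

/-- `I` is a pre-cycle core of `G`: `G|_I` is connected and contains every cycle of `G`. -/
def IsPreCycleCore (G : SimpleGraph V) (I : Set V) : Prop :=
  ConnectedOn G I ∧ ∀ C, IsInducedCycle G C → C ⊆ I

/-- `K` is the cycle core of `G`: the unique minimal pre-cycle core. -/
def IsCycleCore (G : SimpleGraph V) (K : Set V) : Prop :=
  IsPreCycleCore G K ∧ ∀ I, IsPreCycleCore G I → K ⊆ I

/-- A walk is non-backtracking if no step immediately retraces the previous edge. -/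
def IsNonBacktracking {G : SimpleGraph V} {u v : V} (w : G.Walk u v) : Prop :=
  w.darts.Chain' fun d d' => d'.toProd.2 ≠ d.toProd.1

/-! ### Coxeter-theoretic preliminaries -/

variable {B W : Type*} [Group W] {M : CoxeterMatrix B}

/-- `m cs s t` is the order of `s t` in `W` (with the value `0` standing for infinite order). -/
noncomputable def m (cs : CoxeterSystem M W) (s t : B) : ℕ :=
  orderOf (cs.simple s * cs.simple t)

lemma orderOf_conj' {G : Type*} [Group G] (g x : G) : orderOf (g * x * g⁻¹) = orderOf x :=
  orderOf_injective (MulAut.conj g).toMonoidHom (MulAut.conj g).injective x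

lemma m_symm (cs : CoxeterSystem M W) (s t : B) : m cs s t = m cs t s := by
  unfold m
  have h : cs.simple t * cs.simple s
      = cs.simple t * (cs.simple s * cs.simple t) * (cs.simple t)⁻¹ := by group
  rw [h, orderOf_conj']

/-- `m(s,t)` is even (in particular finite). -/
def EvenM (cs : CoxeterSystem M W) (s t : B) : Prop :=
  m cs s t ≠ 0 ∧ Even (m cs s t)

/-- The standard parabolic subgroup `W_I`. -/
def parabolic (cs : CoxeterSystem M W) (I : Set B) : Subgroup W :=
  Subgroup.closure (cs.simple '' I)

/-- `r` is a reflection of the standard parabolic subgroup `W_I`,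
i.e. a `W_I`-conjugate of a simple reflection indexed by `I`. -/
def IsReflectionOf (cs : CoxeterSystem M W) (I : Set B) (r : W) : Prop :=
  ∃ w ∈ parabolic cs I, ∃ s ∈ I, r = w * cs.simple s * w⁻¹

/-- The subgroup `W_I^{⊥x}`, generated by the reflections of `W_I` other than `x` that
commute with `x`. -/
def perp (cs : CoxeterSystem M W) (I : Set B) (x : B) : Subgroup W :=
  Subgroup.closure {r | IsReflectionOf cs I r ∧ r ≠ cs.simple x ∧
    r * cs.simple x = cs.simple x * r}

/-- The odd Coxeter graph `Γ_I^odd`: vertices are the elements of `I`, and distinct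
`s, t ∈ I` are adjacent iff `m(s,t)` is odd. -/
def oddGraph (cs : CoxeterSystem M W) (I : Set B) : SimpleGraph B where
  Adj s t := s ≠ t ∧ s ∈ I ∧ t ∈ I ∧ Odd (m cs s t)
  symm := ⟨fun s t ⟨h1, h2, h3, h4⟩ => ⟨h1.symm, h3, h2, m_symm cs s t ▸ h4⟩⟩
  loopless := ⟨fun s h => h.1 rfl⟩

/-- `I_{∼x}^odd` : the vertex set of the connected component of `Γ_I^odd` containing `x`. -/
def oddComponent (cs : CoxeterSystem M W) (I : Set B) (x : B) : Set B :=
  {y | (oddGraph cs I).Reachable x y}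

/-- The Coxeter graph of `K` is of type `Ã_{n-1}`: `K` admits a cyclic ordering
`y_0, …, y_{n-1}` with `m(y_i, y_{i+1}) = 3` and `m(y_i, y_j) = 2` for all other
pairs of distinct indices. -/
def IsTypeATilde (cs : CoxeterSystem M W) (K : Set B) (n : ℕ) : Prop :=
  ∃ f : ZMod n → B, Function.Injective f ∧ Set.range f = K ∧
    (∀ i, m cs (f i) (f (i + 1)) = 3) ∧
    ∀ i j : ZMod n, j ≠ i → j ≠ i + 1 → i ≠ j + 1 → m cs (f i) (f j) = 2

/-- The Coxeter graph `Γ`: distinct `s, t` are adjacent iff `m(s,t) ≥ 3` (possibly infinite). -/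
def coxGraph (cs : CoxeterSystem M W) : SimpleGraph B where
  Adj s t := s ≠ t ∧ (m cs s t = 0 ∨ 3 ≤ m cs s t)
  symm := ⟨fun s t ⟨h1, h2⟩ => ⟨h1.symm, m_symm cs s t ▸ h2⟩⟩
  loopless := ⟨fun s h => h.1 rfl⟩

end CoxPerp

namespace CoxPerp

open SimpleGraph Walk

variable {V : Type*} {G : SimpleGraph V}

/-- A cycle in the sense of `IsInducedCycle`, except that chords are allowed. -/
def IsCyclicPath (G : SimpleGraph V) {n : ℕ} (f : ZMod n → V) : Prop :=
  3 ≤ n ∧ Function.Injective f ∧ ∀ i, G.Adj (f i) (f (i + 1))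

lemma isCyclicPath_comp_val {n : ℕ} {g : ℕ → V} (hn : 3 ≤ n) (hinj : Set.InjOn g (Set.Iio n))
    (hadj : ∀ k < n, G.Adj (g k) (g ((k + 1) % n))) :
    IsCyclicPath G (fun m : ZMod n => g m.val) := by
  have : NeZero n := ⟨by omega⟩
  refine ⟨hn, fun a b hab => ZMod.val_injective n (hinj a.val_lt b.val_lt hab), fun m => ?_⟩
  show G.Adj (g m.val) (g (m + 1).val)
  rw [ZMod.val_add, ZMod.val_one'' (by omega)]
  exact hadj _ m.val_lt

lemma IsCyclicPath.arc {n : ℕ} {f : ZMod n → V} (hf : IsCyclicPath G f) (a : ZMod n) {L : ℕ}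
    (hL : 2 ≤ L) (hLn : L < n) (hchord : G.Adj (f (a + L)) (f a)) :
    IsCyclicPath G (fun m : ZMod (L + 1) => f (a + (m.val : ℕ))) := by
  obtain ⟨-, hinj, hadj⟩ := hf
  refine isCyclicPath_comp_val (g := fun k => f (a + k)) (by omega) (fun k hk l hl hkl => ?_)
    fun k hk => ?_
  · have := congrArg ZMod.val (add_left_cancel (hinj hkl))
    simp only [Set.mem_Iio] at hk hl
    rwa [ZMod.val_cast_of_lt (by omega), ZMod.val_cast_of_lt (by omega)] at this
  · rcases (by omega : k < L ∨ k = L) with hk | rfl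
    · simpa [Nat.mod_eq_of_lt (by omega : k + 1 < L + 1), add_assoc] using hadj (a + k)
    · simpa using hchord

lemma IsCyclicPath.exists_isInducedCycle_mem {n : ℕ} {f : ZMod n → V} (hf : IsCyclicPath G f)
    (k : ZMod n) : ∃ C, IsInducedCycle G C ∧ f k ∈ C := by
  induction n using Nat.strong_induction_on with
  | _ n ih =>
  by_cases hchordless : ∀ i j, G.Adj (f i) (f j) → j = i + 1 ∨ i = j + 1
  · exact ⟨_, ⟨n, f, hf.1, hf.2.1, rfl, hf.2.2, hchordless⟩, k, rfl⟩
  push Not at hchordless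
  obtain ⟨i, j, hij, hj, hi⟩ := hchordless
  have : NeZero n := ⟨by have := hf.1; omega⟩
  set d := (j - i).val
  have hjd : j = i + d := by simp [d]
  have hd : d < n := ZMod.val_lt _
  have hd0 : d ≠ 0 := by
    rintro h
    rw [h, Nat.cast_zero, add_zero] at hjd
    exact G.loopless.irrefl _ (hjd ▸ hij)
  have hd1 : d ≠ 1 := by rintro h; exact hj (by rw [hjd, h, Nat.cast_one])
  have hdn : d ≠ n - 1 := by
    rintro h
    refine hi ?_
    rw [hjd, h, Nat.cast_sub (by omega), ZMod.natCast_self]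
    ring
  -- The chord cuts `f` into the shorter cyclic paths `f i, …, f j` and `f j, …, f i`.
  obtain ⟨t, ht, rfl⟩ : ∃ t < n, k = i + t := ⟨(k - i).val, ZMod.val_lt _, by simp⟩
  rcases le_or_gt t d with htd | htd
  · obtain ⟨C, hC, hmem⟩ :=
      ih (d + 1) (by omega) (hf.arc i (by omega) (by omega) (hjd ▸ hij.symm)) t
    refine ⟨C, hC, ?_⟩
    simpa [ZMod.val_cast_of_lt (by omega : t < d + 1)] using hmem
  · have hwrap : j + ((n - d : ℕ) : ZMod n) = i := by
      rw [hjd, Nat.cast_sub hd.le, ZMod.natCast_self]; ring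
    obtain ⟨C, hC, hmem⟩ := ih (n - d + 1) (by omega)
      (hf.arc j (by omega) (by omega) (hwrap.symm ▸ hij)) ((t - d : ℕ) : ZMod (n - d + 1))
    refine ⟨C, hC, ?_⟩
    rwa [ZMod.val_cast_of_lt (by omega), hjd, add_assoc, ← Nat.cast_add,
      Nat.add_sub_cancel' htd.le] at hmem

lemma getVert_mod_length {u : V} (c : G.Walk u u) {k : ℕ} (hk : k ≤ c.length) :
    c.getVert (k % c.length) = c.getVert k := by
  rcases hk.lt_or_eq with hk | rfl
  · rw [Nat.mod_eq_of_lt hk]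
  · rw [Nat.mod_self, getVert_zero, getVert_length]

lemma exists_isInducedCycle_mem_of_isCycle {u w : V} {c : G.Walk u u} (hc : c.IsCycle)
    (hw : w ∈ c.support) : ∃ C, IsInducedCycle G C ∧ w ∈ C := by
  have hf : IsCyclicPath G (fun m : ZMod c.length => c.getVert m.val) := by
    refine isCyclicPath_comp_val hc.three_le_length
      (fun k hk l hl hkl => hc.getVert_injOn' ?_ ?_ hkl) fun k hk => ?_
    · simp only [Set.mem_Iio] at hk; simp only [Set.mem_ofPred_eq]; omega
    · simp only [Set.mem_Iio] at hl; simp only [Set.mem_ofPred_eq]; omega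
    · rw [getVert_mod_length c hk]
      exact c.adj_getVert_succ hk
  obtain ⟨k, rfl, hk⟩ := mem_support_iff_exists_getVert.mp hw
  obtain ⟨C, hC, hmem⟩ := hf.exists_isInducedCycle_mem k
  refine ⟨C, hC, ?_⟩
  rwa [ZMod.val_natCast, getVert_mod_length c hk] at hmem

lemma mem_of_mem_support_of_isCycle {I : Set V} (hcyc : ∀ C, IsInducedCycle G C → C ⊆ I)
    {u w : V} {c : G.Walk u u} (hc : c.IsCycle) (hw : w ∈ c.support) : w ∈ I := by
  obtain ⟨C, hC, hwC⟩ := exists_isInducedCycle_mem_of_isCycle hc hw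
  exact hcyc C hC hwC

lemma exists_mem_support_ne_ne_of_isCycle {u : V} {c : G.Walk u u} (hc : c.IsCycle) (y z : V) :
    ∃ w ∈ c.support, w ≠ y ∧ w ≠ z := by
  have hlen := hc.three_le_length
  have hne {a b : ℕ} (ha : 1 ≤ a) (hab : a < b) (hb : b ≤ 3) : c.getVert a ≠ c.getVert b :=
    fun h => hab.ne (hc.getVert_injOn ⟨ha, by omega⟩ ⟨by omega, by omega⟩ h)
  have h12 : c.getVert 1 ≠ c.getVert 2 := hne le_rfl (by omega) (by omega)
  have h13 : c.getVert 1 ≠ c.getVert 3 := hne le_rfl (by omega) le_rfl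
  have h23 : c.getVert 2 ≠ c.getVert 3 := hne (by omega) (by omega) le_rfl
  by_contra! h
  have h' : ∀ i, c.getVert i = y ∨ c.getVert i = z :=
    fun i => or_iff_not_imp_left.mpr (h _ (c.getVert_mem_support i))
  rcases h' 1 with h1 | h1 <;> rcases h' 2 with h2 | h2 <;> rcases h' 3 with h3 | h3 <;>
    simp_all

lemma mem_of_mem_support_restrict {I : Set V} {a b : V} (q : (Restrict G I).Walk a b)
    (ha : a ∈ I) : ∀ w ∈ q.support, w ∈ I := by
  induction q with
  | nil => simpa using ha
  | cons hadj q ih =>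
    simp only [support_cons, List.mem_cons, forall_eq_or_imp]
    exact ⟨ha, ih hadj.2.1⟩

namespace IsNonBacktracking

lemma of_isSubwalk {u v u' v' : V} {p : G.Walk u v} {q : G.Walk u' v'}
    (hp : IsNonBacktracking p) (hqp : q.IsSubwalk p) : IsNonBacktracking q :=
  List.IsChain.infix hp hqp.darts_isInfix

lemma three_le_length {u : V} {c : G.Walk u u} (hc : IsNonBacktracking c) (hnil : ¬c.Nil) :
    3 ≤ c.length := by
  match c, hc, hnil with
  | .nil, _, hnil => exact absurd Walk.Nil.nil hnil
  | .cons h .nil, _, _ => exact absurd h (G.loopless.irrefl _)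
  | .cons _ (.cons _ .nil), hc, _ => exact absurd rfl (List.isChain_pair.mp hc)
  | .cons _ (.cons _ (.cons _ _)), _, _ => simp

lemma exists_isCycle_isSubwalk {u v : V} {p : G.Walk u v} (hp : IsNonBacktracking p)
    (hpath : ¬p.IsPath) : ∃ (x : V) (c : G.Walk x x), c.IsCycle ∧ c.IsSubwalk p := by
  simp only [isPath_iff_isSubwalk_imp_nil, not_forall] at hpath
  obtain ⟨x, c, hcp, hnil⟩ := hpath
  induction hlen : c.length using Nat.strong_induction_on generalizing x c with
  | _ n ih =>
  by_cases htail : c.tail.IsPath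
  · refine ⟨x, c, isCycle_iff_isPath_tail_and_le_length.mpr ⟨htail, ?_⟩, hcp⟩
    exact (hp.of_isSubwalk hcp).three_le_length hnil
  · simp only [isPath_iff_isSubwalk_imp_nil, not_forall] at htail
    obtain ⟨x', c', hc'c, hc'⟩ := htail
    have hlt : c'.length < n := by
      have := hc'c.darts_isInfix.length_le
      simp only [length_darts, length_tail] at this
      have : 0 < c.length := not_nil_iff_lt_length.mp hnil
      omega
    exact ih _ hlt x' c' (hc'c.trans hcp.tail) hc' rfl

end IsNonBacktracking

variable {I : Set V}

lemma IsNonBacktracking.support_subset_of_internallyDisjoint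
    (hconn : ∀ u ∈ I, ∀ v ∈ I, (Restrict G I).Reachable u v)
    (hcyc : ∀ C, IsInducedCycle G C → C ⊆ I) {y z : V} (hy : y ∈ I) (hz : z ∈ I)
    {p : G.Walk y z} (hp : IsNonBacktracking p)
    (hends : ∀ w ∈ p.support, w ∈ I → w = y ∨ w = z) :
    ∀ v ∈ p.support, v ∈ I := by
  classical
  by_cases hpath : p.IsPath
  · intro v hv
    by_contra hvI
    have hlen : 1 < p.length := by
      obtain ⟨k, rfl, hk⟩ := mem_support_iff_exists_getVert.mp hv
      have : k ≠ 0 := by rintro rfl; exact hvI (by rwa [getVert_zero])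
      have : k ≠ p.length := by rintro rfl; exact hvI (by rwa [getVert_length])
      omega
    obtain ⟨r⟩ := hconn z hz y hy
    set q := r.bypass.mapLe (fun _ _ h => h.2.2 : Restrict G I ≤ G)
    have hqI : ∀ w ∈ q.support, w ∈ I := by
      rw [support_mapLe_eq_support]
      exact mem_of_mem_support_restrict _ hz
    have hq : q.IsPath := r.bypass_isPath.mapLe _
    have hdisj : p.support.tail.Disjoint q.support.tail := by
      intro w hwp hwq
      rcases hends w (List.mem_of_mem_tail hwp) (hqI w (List.mem_of_mem_tail hwq)) with rfl | rfl
      · exact (List.nodup_cons.mp (p.cons_tail_support ▸ hpath.support_nodup)).1 hwp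
      · exact (List.nodup_cons.mp (q.cons_tail_support ▸ hq.support_nodup)).1 hwq
    exact hvI (mem_of_mem_support_of_isCycle hcyc (hpath.isCycle_append hq hdisj (.inl hlen))
      (support_subset_support_append_left _ _ hv))
  · obtain ⟨x, c, hc, hcp⟩ := hp.exists_isCycle_isSubwalk hpath
    obtain ⟨w, hw, hwy, hwz⟩ := exists_mem_support_ne_ne_of_isCycle hc y z
    have := hends w (hcp.support_subset hw) (mem_of_mem_support_of_isCycle hcyc hc hw)
    tauto

lemma IsNonBacktracking.support_subset
    (hconn : ∀ u ∈ I, ∀ v ∈ I, (Restrict G I).Reachable u v)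
    (hcyc : ∀ C, IsInducedCycle G C → C ⊆ I) {y z : V} (hy : y ∈ I) (hz : z ∈ I)
    {p : G.Walk y z} (hp : IsNonBacktracking p) : ∀ v ∈ p.support, v ∈ I := by
  induction hlen : p.length using Nat.strong_induction_on generalizing y z with
  | _ n ih =>
  classical
  by_cases hsplit : ∃ w ∈ p.support, w ∈ I ∧ w ≠ y ∧ w ≠ z
  · obtain ⟨w, hw, hwI, hwy, hwz⟩ := hsplit
    intro v hv
    rw [← p.take_spec hw, mem_support_append_iff] at hv
    rcases hv with hv | hv
    · exact ih _ (hlen ▸ p.length_takeUntil_lt_length hw hwz) hy hwI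
        (hp.of_isSubwalk (p.isSubwalk_takeUntil hw)) rfl v hv
    · exact ih _ (hlen ▸ p.length_dropUntil_lt_length hw hwy) hwI hz
        (hp.of_isSubwalk (p.isSubwalk_dropUntil hw)) rfl v hv
  · push Not at hsplit
    exact hp.support_subset_of_internallyDisjoint hconn hcyc hy hz
      fun w hw hwI => or_iff_not_imp_left.mpr (hsplit w hw hwI)

end CoxPerp

open CoxPerp in
theorem statement_1_general {V : Type*} (G : SimpleGraph V) (I : Set V)
    (hI : IsPreCycleCore G I)
    (y z : V) (hy : y ∈ I) (hz : z ∈ I)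
    (p : G.Walk y z) (hp : IsNonBacktracking p) :
    ∀ v ∈ p.support, v ∈ I :=
  hp.support_subset hI.1.2 hI.2 hy hz

open CoxPerp in
/-- every non-backtracking walk between two vertices of a pre-cycle core stays
in the pre-cycle core. -/
theorem statement_1 {V : Type*} (G : SimpleGraph V) (I : Set V)
    (hG : G.Connected) (hI : IsPreCycleCore G I)
    (y z : V) (hy : y ∈ I) (hz : z ∈ I)
    (p : G.Walk y z) (hp : IsNonBacktracking p) :
    ∀ v ∈ p.support, v ∈ I :=
  statement_1_general G I hI y z hy hz p hp
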